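/- Let G be a toroidal grid diagram of size n representing a knot. Then the Alexander grading A(x) is an integer for every generator x ∈ S(G). -/

import Mathlib

open Finset

noncomputable section

open scoped Classical

/-- A formal rational-coefficient combination of points in the plane. -/
abbrev PtComb := (ℝ × ℝ) →₀ ℚ

/-- `I(A,B)`: the number of pairs `(a, b) ∈ A × B` with `a₁ < b₁` and `a₂ < b₂`,
extended bilinearly to formal combinations of finite point sets. -/
def Ifun (f g : PtComb) : ℚ :=
  ∑ p ∈ f.support, ∑ q ∈ g.support,
    if p.1 < q.1 ∧ p.2 < q.2 then f p * g q else 0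

/-- `J(A,B) = (I(A,B) + I(B,A))/2`. -/
def Jfun (f g : PtComb) : ℚ := (Ifun f g + Ifun g f) / 2

/-- A toroidal grid diagram of size `n`: a pair of permutations `σX`, `σO` of
`{0, …, n-1}` with `σX i ≠ σO i` for all `i`. -/
structure Grid (n : ℕ) where
  σX : Equiv.Perm (Fin n)
  σO : Equiv.Perm (Fin n)
  disj : ∀ i, σX i ≠ σO i

namespace Grid

variable {n : ℕ}

/-- `G` represents a knot: the permutation `σO⁻¹ ∘ σX` has a single orbit,
i.e. it is an `n`-cycle. -/
def RepKnot (G : Grid n) : Prop :=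
  ∀ i j : Fin n, ∃ k : ℕ, ((G.σO⁻¹ * G.σX) ^ k) i = j

/-- The `X`-marking of column `i`, at the planar point `(i + 1/2, σX i + 1/2)`. -/
def Xpt (G : Grid n) (i : Fin n) : ℝ × ℝ :=
  (((i : ℕ) : ℝ) + 1/2, ((G.σX i : ℕ) : ℝ) + 1/2)

/-- The `O`-marking of column `i`, at the planar point `(i + 1/2, σO i + 1/2)`. -/
def Opt (G : Grid n) (i : Fin n) : ℝ × ℝ :=
  (((i : ℕ) : ℝ) + 1/2, ((G.σO i : ℕ) : ℝ) + 1/2)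

/-- The set `𝕏` of `X`-markings, as a formal point combination. -/
def XX (G : Grid n) : PtComb := ∑ i : Fin n, Finsupp.single (G.Xpt i) 1

/-- The set `𝕆` of `O`-markings, as a formal point combination. -/
def OO (G : Grid n) : PtComb := ∑ i : Fin n, Finsupp.single (G.Opt i) 1

/-- The point set `{(i, x i)}` of a generator `x`, as a formal point combination. -/
def pts (x : Equiv.Perm (Fin n)) : PtComb :=
  ∑ i : Fin n, Finsupp.single (((i : ℕ) : ℝ), ((x i : ℕ) : ℝ)) 1

/-- The Maslov grading `M(x) = J(x − 𝕆, x − 𝕆) + 1`. -/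
def M (G : Grid n) (x : Equiv.Perm (Fin n)) : ℚ :=
  Jfun (pts x - G.OO) (pts x - G.OO) + 1

/-- The `X`-Maslov grading `M_𝕏(x) = J(x − 𝕏, x − 𝕏) + 1`. -/
def MX (G : Grid n) (x : Equiv.Perm (Fin n)) : ℚ :=
  Jfun (pts x - G.XX) (pts x - G.XX) + 1

/-- The Alexander grading `A(x) = J(x − (𝕏+𝕆)/2, 𝕏 − 𝕆) − (n−1)/2`. -/
def A (G : Grid n) (x : Equiv.Perm (Fin n)) : ℚ :=
  Jfun (pts x - (2 : ℚ)⁻¹ • (G.XX + G.OO)) (G.XX - G.OO) - ((n : ℚ) - 1) / 2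

/-- The canonical generator `x^LL`, whose points are the lower-left corners of the
`X`-marked squares. -/
def xLL (G : Grid n) : Equiv.Perm (Fin n) := G.σX

/-- The canonical generator `x^UR`, `x^UR(i) = σX((i−1) mod n) + 1 (mod n)`, whose points
are the upper-right corners of the `X`-marked squares (reduced mod `n`). -/
def xUR [NeZero n] (G : Grid n) : Equiv.Perm (Fin n) where
  toFun i := G.σX (i - 1) + 1
  invFun i := G.σX.symm (i - 1) + 1
  left_inv i := by simp
  right_inv i := by simp

end Grid

lemma Ifun_eq_sum (f g : PtComb) {s t : Finset (ℝ × ℝ)}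
    (hf : f.support ⊆ s) (hg : g.support ⊆ t) :
    Ifun f g = ∑ p ∈ s, ∑ q ∈ t, if p.1 < q.1 ∧ p.2 < q.2 then f p * g q else 0 := by
  unfold Ifun
  have h1 : ∀ p : ℝ × ℝ, (∑ q ∈ g.support, if p.1 < q.1 ∧ p.2 < q.2 then f p * g q else 0)
      = ∑ q ∈ t, if p.1 < q.1 ∧ p.2 < q.2 then f p * g q else 0 := fun p =>
    Finset.sum_subset hg (fun q _ hq => by
      simp [Finsupp.notMem_support_iff.mp hq])
  calc (∑ p ∈ f.support, ∑ q ∈ g.support, if p.1 < q.1 ∧ p.2 < q.2 then f p * g q else 0)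
      = ∑ p ∈ f.support, ∑ q ∈ t, if p.1 < q.1 ∧ p.2 < q.2 then f p * g q else 0 :=
        Finset.sum_congr rfl (fun p _ => h1 p)
    _ = _ := Finset.sum_subset hf (fun p _ hp => by
        simp [Finsupp.notMem_support_iff.mp hp])

lemma Ifun_zero_left (g : PtComb) : Ifun 0 g = 0 := by simp [Ifun]
lemma Ifun_zero_right (f : PtComb) : Ifun f 0 = 0 := by simp [Ifun]

lemma Ifun_add_left (f₁ f₂ g : PtComb) : Ifun (f₁ + f₂) g = Ifun f₁ g + Ifun f₂ g := by
  rw [Ifun_eq_sum (f₁ + f₂) g (s := f₁.support ∪ f₂.support) Finsupp.support_add subset_rfl,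
    Ifun_eq_sum f₁ g (s := f₁.support ∪ f₂.support) Finset.subset_union_left subset_rfl,
    Ifun_eq_sum f₂ g (s := f₁.support ∪ f₂.support) Finset.subset_union_right subset_rfl,
    ← Finset.sum_add_distrib]
  refine Finset.sum_congr rfl fun p _ => ?_
  rw [← Finset.sum_add_distrib]
  refine Finset.sum_congr rfl fun q _ => ?_
  simp only [Finsupp.add_apply]
  split <;> ring

lemma Ifun_add_right (f g₁ g₂ : PtComb) : Ifun f (g₁ + g₂) = Ifun f g₁ + Ifun f g₂ := by
  rw [Ifun_eq_sum f (g₁ + g₂) (t := g₁.support ∪ g₂.support) subset_rfl Finsupp.support_add,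
    Ifun_eq_sum f g₁ (t := g₁.support ∪ g₂.support) subset_rfl Finset.subset_union_left,
    Ifun_eq_sum f g₂ (t := g₁.support ∪ g₂.support) subset_rfl Finset.subset_union_right,
    ← Finset.sum_add_distrib]
  refine Finset.sum_congr rfl fun p _ => ?_
  rw [← Finset.sum_add_distrib]
  refine Finset.sum_congr rfl fun q _ => ?_
  simp only [Finsupp.add_apply]
  split <;> ring

lemma Ifun_smul_left (c : ℚ) (f g : PtComb) : Ifun (c • f) g = c * Ifun f g := by
  rw [Ifun_eq_sum (c • f) g (s := f.support) (Finsupp.support_smul) subset_rfl,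
    Ifun_eq_sum f g (s := f.support) subset_rfl subset_rfl, Finset.mul_sum]
  refine Finset.sum_congr rfl fun p _ => ?_
  rw [Finset.mul_sum]
  refine Finset.sum_congr rfl fun q _ => ?_
  simp only [Finsupp.smul_apply, smul_eq_mul]
  split <;> ring

lemma Ifun_smul_right (c : ℚ) (f g : PtComb) : Ifun f (c • g) = c * Ifun f g := by
  rw [Ifun_eq_sum f (c • g) (t := g.support) subset_rfl (Finsupp.support_smul),
    Ifun_eq_sum f g (t := g.support) subset_rfl subset_rfl, Finset.mul_sum]
  refine Finset.sum_congr rfl fun p _ => ?_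
  rw [Finset.mul_sum]
  refine Finset.sum_congr rfl fun q _ => ?_
  simp only [Finsupp.smul_apply, smul_eq_mul]
  split <;> ring

lemma Ifun_neg_left (f g : PtComb) : Ifun (-f) g = - Ifun f g := by
  have := Ifun_smul_left (-1) f g; simpa using this

lemma Ifun_neg_right (f g : PtComb) : Ifun f (-g) = - Ifun f g := by
  have := Ifun_smul_right (-1) f g; simpa using this

lemma Ifun_sub_left (f₁ f₂ g : PtComb) : Ifun (f₁ - f₂) g = Ifun f₁ g - Ifun f₂ g := by
  rw [sub_eq_add_neg, Ifun_add_left, Ifun_neg_left, sub_eq_add_neg]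

lemma Ifun_sub_right (f g₁ g₂ : PtComb) : Ifun f (g₁ - g₂) = Ifun f g₁ - Ifun f g₂ := by
  rw [sub_eq_add_neg, Ifun_add_right, Ifun_neg_right, sub_eq_add_neg]

lemma Ifun_sum_left {ι : Type*} (s : Finset ι) (f : ι → PtComb) (g : PtComb) :
    Ifun (∑ i ∈ s, f i) g = ∑ i ∈ s, Ifun (f i) g := by
  induction s using Finset.cons_induction with
  | empty => simp [Ifun_zero_left]
  | cons a s ha ih => rw [Finset.sum_cons, Ifun_add_left, ih, Finset.sum_cons]

lemma Ifun_sum_right {ι : Type*} (s : Finset ι) (f : PtComb) (g : ι → PtComb) :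
    Ifun f (∑ i ∈ s, g i) = ∑ i ∈ s, Ifun f (g i) := by
  induction s using Finset.cons_induction with
  | empty => simp [Ifun_zero_right]
  | cons a s ha ih => rw [Finset.sum_cons, Ifun_add_right, ih, Finset.sum_cons]

lemma Ifun_single_single (p q : ℝ × ℝ) (a b : ℚ) :
    Ifun (Finsupp.single p a) (Finsupp.single q b)
      = if p.1 < q.1 ∧ p.2 < q.2 then a * b else 0 := by
  rw [Ifun_eq_sum (Finsupp.single p a) (Finsupp.single q b) (s := {p}) (t := {q})
    Finsupp.support_single_subset Finsupp.support_single_subset]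
  simp [Finsupp.single_eq_same]


lemma card_filter_and_not {α : Type*} (s : Finset α) (P Q : α → Prop)
    [DecidablePred P] [DecidablePred Q] :
    (s.filter fun a => P a ∧ Q a).card + (s.filter fun a => P a ∧ ¬ Q a).card
      = (s.filter P).card := by
  classical
  have h1 : (s.filter fun a => P a ∧ Q a) = (s.filter P).filter Q := by
    rw [Finset.filter_filter]
  have h2 : (s.filter fun a => P a ∧ ¬ Q a) = (s.filter P).filter fun a => ¬ Q a := by
    rw [Finset.filter_filter]
  rw [h1, h2]
  exact Finset.card_filter_add_card_filter_not _

lemma card_filter_split {α : Type*} (s : Finset α) (P Q : α → Prop)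
    [DecidablePred P] [DecidablePred Q] :
    (s.filter fun a => P a ∧ Q a).card + (s.filter fun a => ¬ P a ∧ Q a).card
      = (s.filter Q).card := by
  classical
  have h1 : (s.filter fun a => P a ∧ Q a) = s.filter fun a => Q a ∧ P a :=
    Finset.filter_congr fun a _ => by tauto
  have h2 : (s.filter fun a => ¬ P a ∧ Q a) = s.filter fun a => Q a ∧ ¬ P a :=
    Finset.filter_congr fun a _ => by tauto
  rw [h1, h2]
  exact card_filter_and_not s Q P

lemma card_swap_pred {n : ℕ} (Q : Fin n × Fin n → Prop) [DecidablePred Q] :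
    (Finset.univ.filter Q).card
      = (Finset.univ.filter fun p : Fin n × Fin n => Q p.swap).card := by
  classical
  refine Finset.card_nbij' Prod.swap Prod.swap ?_ ?_ ?_ ?_
  · intro p hp
    simp only [Finset.mem_coe, Finset.mem_filter, Finset.mem_univ, true_and, Prod.swap_swap] at hp ⊢
    exact hp
  · intro p hp
    simp only [Finset.mem_coe, Finset.mem_filter, Finset.mem_univ, true_and] at hp ⊢
    exact hp
  · intro p _; exact Prod.swap_swap p
  · intro p _; exact Prod.swap_swap p

lemma card_T_eq {n : ℕ} (x σ τ : Equiv.Perm (Fin n)) :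
    (Finset.univ.filter fun p : Fin n × Fin n => (σ p.2 : ℕ) < (x p.1 : ℕ)).card
      = (Finset.univ.filter fun p : Fin n × Fin n => (τ p.2 : ℕ) < (x p.1 : ℕ)).card := by
  classical
  refine Finset.card_nbij' (fun p => (p.1, τ.symm (σ p.2))) (fun p => (p.1, σ.symm (τ p.2)))
    ?_ ?_ ?_ ?_
  · intro p hp
    simp only [Finset.mem_coe, Finset.mem_filter, Finset.mem_univ, true_and,
      Equiv.apply_symm_apply] at hp ⊢
    exact hp
  · intro p hp
    simp only [Finset.mem_coe, Finset.mem_filter, Finset.mem_univ, true_and,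
      Equiv.apply_symm_apply] at hp ⊢
    exact hp
  · intro p _
    simp
  · intro p _
    simp

lemma Ifun_pair {n : ℕ} (P Q : Fin n → ℝ × ℝ) :
    Ifun (∑ i : Fin n, Finsupp.single (P i) 1) (∑ j : Fin n, Finsupp.single (Q j) 1)
      = ∑ i : Fin n, ∑ j : Fin n,
          if (P i).1 < (Q j).1 ∧ (P i).2 < (Q j).2 then (1 : ℚ) else 0 := by
  rw [Ifun_sum_left]
  refine Finset.sum_congr rfl fun i _ => ?_
  rw [Ifun_sum_right]
  refine Finset.sum_congr rfl fun j _ => ?_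
  rw [Ifun_single_single, mul_one]

lemma half_lt (a b : ℕ) : ((a : ℝ) < (b : ℝ) + 1/2) ↔ a ≤ b := by
  constructor
  · intro h
    have h2 : (a : ℝ) < (b : ℝ) + 1 := by linarith
    have h3 : a < b + 1 := by exact_mod_cast h2
    omega
  · intro h
    have : (a : ℝ) ≤ (b : ℝ) := by exact_mod_cast h
    linarith

lemma lt_half (a b : ℕ) : ((a : ℝ) + 1/2 < (b : ℝ)) ↔ a < b := by
  constructor
  · intro h
    have h2 : (a : ℝ) < (b : ℝ) := by linarith
    exact_mod_cast h2
  · intro h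
    have h2 : a + 1 ≤ b := h
    have : (a : ℝ) + 1 ≤ (b : ℝ) := by exact_mod_cast h2
    linarith

lemma half_lt_half (a b : ℕ) : ((a : ℝ) + 1/2 < (b : ℝ) + 1/2) ↔ a < b := by
  rw [add_lt_add_iff_right]
  exact_mod_cast Iff.rfl

lemma sum_ind {n : ℕ} (P : Fin n → Fin n → Prop) [∀ i j, Decidable (P i j)] :
    (∑ i : Fin n, ∑ j : Fin n, if P i j then (1 : ℚ) else 0)
      = ((Finset.univ.filter fun p : Fin n × Fin n => P p.1 p.2).card : ℚ) := by
  rw [← Finset.sum_product', Finset.univ_product_univ, Finset.sum_boole]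

lemma prod_neg_one_ite {α : Type*} [DecidableEq α] (s : Finset α) (P : α → Prop)
    [DecidablePred P] :
    (∏ x ∈ s, if P x then (-1 : ℤˣ) else 1) = (-1) ^ (s.filter P).card := by
  rw [Finset.prod_ite, Finset.prod_const, Finset.prod_const, one_pow, mul_one]

lemma signAux_eq_sign {n : ℕ} (f : Equiv.Perm (Fin n)) :
    Equiv.Perm.signAux f = Equiv.Perm.sign f := by
  refine Equiv.Perm.swap_induction_on f ?_ ?_
  · simp [Equiv.Perm.signAux_one]
  · intro g a b hab ih
    rw [Equiv.Perm.signAux_mul, Equiv.Perm.sign_mul, Equiv.Perm.signAux_swap hab,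
      Equiv.Perm.sign_swap hab, ih]

lemma signAux_eq_pow {n : ℕ} (f : Equiv.Perm (Fin n)) :
    Equiv.Perm.signAux f
      = (-1) ^ ((Finset.univ.filter fun p : Fin n × Fin n =>
          p.1 < p.2 ∧ ¬ (f p.1 < f p.2)).card) := by
  classical
  unfold Equiv.Perm.signAux
  rw [prod_neg_one_ite]
  congr 1
  refine Finset.card_nbij' (fun a => ((a.2, a.1) : Fin n × Fin n))
    (fun p => (⟨p.2, p.1⟩ : Σ _ : Fin n, Fin n)) ?_ ?_ ?_ ?_
  · intro a ha
    rw [Finset.mem_coe, Finset.mem_filter] at ha ⊢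
    obtain ⟨h1, h2⟩ := ha
    rw [Equiv.Perm.mem_finPairsLT] at h1
    exact ⟨Finset.mem_univ _, h1, not_lt.mpr h2⟩
  · intro p hp
    rw [Finset.mem_coe, Finset.mem_filter] at hp ⊢
    obtain ⟨-, h1, h2⟩ := hp
    exact ⟨Equiv.Perm.mem_finPairsLT.mpr h1, not_lt.mp h2⟩
  · intro a _; rfl
  · intro p _; rfl

set_option maxHeartbeats 1600000 in
/-- For a toroidal grid diagram `G` of size `n` representing a knot,
the Alexander grading of every generator is an integer. -/
theorem alexander_integral {n : ℕ} [NeZero n] (hn : 2 ≤ n)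
    (G : Grid n) (hK : G.RepKnot) (x : Equiv.Perm (Fin n)) :
    ∃ m : ℤ, G.A x = (m : ℚ) := by
  classical
  -- Step 1: bilinear expansion of A
  have hexp : G.A x = (Ifun (Grid.pts x) G.XX + Ifun G.XX (Grid.pts x)
      - Ifun (Grid.pts x) G.OO - Ifun G.OO (Grid.pts x)
      - Ifun G.XX G.XX + Ifun G.OO G.OO) / 2 - ((n : ℚ) - 1) / 2 := by
    unfold Grid.A Jfun
    simp only [Ifun_sub_left, Ifun_sub_right, Ifun_add_left, Ifun_add_right,
      Ifun_smul_left, Ifun_smul_right]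
    ring
  -- Step 2: each atomic Ifun as a cardinality
  have h1 : Ifun (Grid.pts x) G.XX
      = ((Finset.univ.filter fun p : Fin n × Fin n =>
          p.1 ≤ p.2 ∧ x p.1 ≤ G.σX p.2).card : ℚ) := by
    unfold Grid.pts Grid.XX Grid.Xpt
    rw [Ifun_pair, sum_ind]
    norm_cast
    apply congrArg Finset.card
    apply Finset.filter_congr
    intro p _
    simp only [half_lt, lt_half, half_lt_half, Fin.val_fin_le, Fin.val_fin_lt]
  have h2 : Ifun G.XX (Grid.pts x)
      = ((Finset.univ.filter fun p : Fin n × Fin n =>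
          p.1 < p.2 ∧ G.σX p.1 < x p.2).card : ℚ) := by
    unfold Grid.pts Grid.XX Grid.Xpt
    rw [Ifun_pair, sum_ind]
    norm_cast
    apply congrArg Finset.card
    apply Finset.filter_congr
    intro p _
    simp only [half_lt, lt_half, half_lt_half, Fin.val_fin_le, Fin.val_fin_lt]
  have h3 : Ifun (Grid.pts x) G.OO
      = ((Finset.univ.filter fun p : Fin n × Fin n =>
          p.1 ≤ p.2 ∧ x p.1 ≤ G.σO p.2).card : ℚ) := by
    unfold Grid.pts Grid.OO Grid.Opt
    rw [Ifun_pair, sum_ind]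
    norm_cast
    apply congrArg Finset.card
    apply Finset.filter_congr
    intro p _
    simp only [half_lt, lt_half, half_lt_half, Fin.val_fin_le, Fin.val_fin_lt]
  have h4 : Ifun G.OO (Grid.pts x)
      = ((Finset.univ.filter fun p : Fin n × Fin n =>
          p.1 < p.2 ∧ G.σO p.1 < x p.2).card : ℚ) := by
    unfold Grid.pts Grid.OO Grid.Opt
    rw [Ifun_pair, sum_ind]
    norm_cast
    apply congrArg Finset.card
    apply Finset.filter_congr
    intro p _
    simp only [half_lt, lt_half, half_lt_half, Fin.val_fin_le, Fin.val_fin_lt]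
  have h5 : Ifun G.XX G.XX
      = ((Finset.univ.filter fun p : Fin n × Fin n =>
          p.1 < p.2 ∧ G.σX p.1 < G.σX p.2).card : ℚ) := by
    unfold Grid.XX Grid.Xpt
    rw [Ifun_pair, sum_ind]
    norm_cast
    apply congrArg Finset.card
    apply Finset.filter_congr
    intro p _
    simp only [half_lt, lt_half, half_lt_half, Fin.val_fin_le, Fin.val_fin_lt]
  have h6 : Ifun G.OO G.OO
      = ((Finset.univ.filter fun p : Fin n × Fin n =>
          p.1 < p.2 ∧ G.σO p.1 < G.σO p.2).card : ℚ) := by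
    unfold Grid.OO Grid.Opt
    rw [Ifun_pair, sum_ind]
    norm_cast
    apply congrArg Finset.card
    apply Finset.filter_congr
    intro p _
    simp only [half_lt, lt_half, half_lt_half, Fin.val_fin_le, Fin.val_fin_lt]
  -- names for the cardinalities
  set a1 := (Finset.univ.filter fun p : Fin n × Fin n =>
      p.1 ≤ p.2 ∧ x p.1 ≤ G.σX p.2).card with ha1
  set a2 := (Finset.univ.filter fun p : Fin n × Fin n =>
      p.1 < p.2 ∧ G.σX p.1 < x p.2).card with ha2
  set a3 := (Finset.univ.filter fun p : Fin n × Fin n =>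
      p.1 ≤ p.2 ∧ x p.1 ≤ G.σO p.2).card with ha3
  set a4 := (Finset.univ.filter fun p : Fin n × Fin n =>
      p.1 < p.2 ∧ G.σO p.1 < x p.2).card with ha4
  set a5 := (Finset.univ.filter fun p : Fin n × Fin n =>
      p.1 < p.2 ∧ G.σX p.1 < G.σX p.2).card with ha5
  set a6 := (Finset.univ.filter fun p : Fin n × Fin n =>
      p.1 < p.2 ∧ G.σO p.1 < G.σO p.2).card with ha6
  set c1 := (Finset.univ.filter fun p : Fin n × Fin n =>
      p.1 ≤ p.2 ∧ ¬ (x p.1 ≤ G.σX p.2)).card with hc1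
  set c3 := (Finset.univ.filter fun p : Fin n × Fin n =>
      p.1 ≤ p.2 ∧ ¬ (x p.1 ≤ G.σO p.2)).card with hc3
  set b2 := (Finset.univ.filter fun p : Fin n × Fin n =>
      ¬ (p.1 ≤ p.2) ∧ G.σX p.2 < x p.1).card with hb2
  set b4 := (Finset.univ.filter fun p : Fin n × Fin n =>
      ¬ (p.1 ≤ p.2) ∧ G.σO p.2 < x p.1).card with hb4
  set T1 := (Finset.univ.filter fun p : Fin n × Fin n =>
      G.σX p.2 < x p.1).card with hT1
  set T3 := (Finset.univ.filter fun p : Fin n × Fin n =>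
      G.σO p.2 < x p.1).card with hT3
  set e := (Finset.univ.filter fun p : Fin n × Fin n => p.1 ≤ p.2).card with he
  set Fc := (Finset.univ.filter fun p : Fin n × Fin n => p.1 < p.2).card with hFc
  set K5 := (Finset.univ.filter fun p : Fin n × Fin n =>
      p.1 < p.2 ∧ ¬ (G.σX p.1 < G.σX p.2)).card with hK5
  set K6 := (Finset.univ.filter fun p : Fin n × Fin n =>
      p.1 < p.2 ∧ ¬ (G.σO p.1 < G.σO p.2)).card with hK6
  -- combinatorial identities
  have compl1 : a1 + c1 = e := by
    rw [ha1, hc1, he]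
    exact card_filter_and_not _ _ _
  have compl3 : a3 + c3 = e := by
    rw [ha3, hc3, he]
    exact card_filter_and_not _ _ _
  have complK5 : a5 + K5 = Fc := by
    rw [ha5, hK5, hFc]
    exact card_filter_and_not _ _ _
  have complK6 : a6 + K6 = Fc := by
    rw [ha6, hK6, hFc]
    exact card_filter_and_not _ _ _
  have swap2 : a2 = b2 := by
    rw [ha2, hb2, card_swap_pred (fun p : Fin n × Fin n => p.1 < p.2 ∧ G.σX p.1 < x p.2)]
    apply congrArg Finset.card
    apply Finset.filter_congr
    intro p _
    rw [Prod.fst_swap, Prod.snd_swap, not_le]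
  have swap4 : a4 = b4 := by
    rw [ha4, hb4, card_swap_pred (fun p : Fin n × Fin n => p.1 < p.2 ∧ G.σO p.1 < x p.2)]
    apply congrArg Finset.card
    apply Finset.filter_congr
    intro p _
    rw [Prod.fst_swap, Prod.snd_swap, not_le]
  have split1 : c1 + b2 = T1 := by
    have hc1' : c1 = (Finset.univ.filter fun p : Fin n × Fin n =>
        p.1 ≤ p.2 ∧ G.σX p.2 < x p.1).card := by
      rw [hc1]
      apply congrArg Finset.card
      apply Finset.filter_congr
      intro p _
      rw [not_le]
    rw [hc1', hb2, hT1]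
    exact card_filter_split _ _ _
  have split3 : c3 + b4 = T3 := by
    have hc3' : c3 = (Finset.univ.filter fun p : Fin n × Fin n =>
        p.1 ≤ p.2 ∧ G.σO p.2 < x p.1).card := by
      rw [hc3]
      apply congrArg Finset.card
      apply Finset.filter_congr
      intro p _
      rw [not_le]
    rw [hc3', hb4, hT3]
    exact card_filter_split _ _ _
  have hTT : T1 = T3 := by
    rw [hT1, hT3]
    exact card_T_eq x G.σX G.σO
  -- Step 3: the parity fact from the knot condition
  have hEven : Even (K5 + K6 + (n - 1)) := by
    set c := G.σO⁻¹ * G.σX with hc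
    have hfix : ∀ y : Fin n, c y ≠ y := by
      intro y h
      apply G.disj y
      have h2 := congrArg G.σO h
      rw [hc] at h2
      simpa using h2
    have hcyc : c.IsCycle := by
      refine ⟨0, hfix 0, fun y _ => ?_⟩
      obtain ⟨k, hk⟩ := hK 0 y
      exact ⟨(k : ℤ), by simpa [zpow_natCast] using hk⟩
    have hsupp : c.support = Finset.univ :=
      Finset.eq_univ_iff_forall.mpr fun y => Equiv.Perm.mem_support.mpr (hfix y)
    have hsign : Equiv.Perm.sign c = (-1) ^ (n - 1) := by
      rw [hcyc.sign, hsupp]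
      simp only [Finset.card_univ, Fintype.card_fin]
      have hp : (-1 : ℤˣ) ^ n = (-1) ^ (n - 1) * (-1) := by
        conv_lhs => rw [show n = (n - 1) + 1 by omega]
        rw [pow_succ]
      rw [hp]
      simp
    have hprod : ((-1 : ℤˣ)) ^ (K5 + K6) = (-1) ^ (n - 1) := by
      have e5 : ((-1 : ℤˣ)) ^ K5 = Equiv.Perm.sign G.σX := by
        rw [← signAux_eq_sign, signAux_eq_pow, hK5]
      have e6 : ((-1 : ℤˣ)) ^ K6 = Equiv.Perm.sign G.σO := by
        rw [← signAux_eq_sign, signAux_eq_pow, hK6]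
      calc ((-1 : ℤˣ)) ^ (K5 + K6) = (-1) ^ K5 * (-1) ^ K6 := pow_add _ _ _
        _ = Equiv.Perm.sign G.σX * Equiv.Perm.sign G.σO := by rw [e5, e6]
        _ = Equiv.Perm.sign c := by
            rw [hc, Equiv.Perm.sign_mul, Equiv.Perm.sign_inv, mul_comm]
        _ = (-1) ^ (n - 1) := hsign
    have hone : ((-1 : ℤˣ)) ^ (K5 + K6 + (n - 1)) = 1 := by
      rw [pow_add, hprod, ← pow_add, ← two_mul, pow_mul]
      norm_num
    have hne : (-1 : ℤˣ) ≠ 1 := by decide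
    exact (neg_one_pow_eq_one_iff_even hne).mp hone
  -- Step 4: assemble
  obtain ⟨t, ht⟩ := hEven
  refine ⟨(c3 : ℤ) - c1 + t - K6 - ((n : ℤ) - 1), ?_⟩
  have key : (a1 : ℤ) + a2 - a3 - a4 - a5 + a6 - ((n : ℤ) - 1)
      = 2 * ((c3 : ℤ) - c1 + t - K6 - ((n : ℤ) - 1)) := by omega
  rw [hexp, h1, h2, h3, h4, h5, h6]
  have key2 : ((a1 : ℚ) + a2 - a3 - a4 - a5 + a6 - ((n : ℚ) - 1))
      = 2 * ((c3 : ℚ) - c1 + t - K6 - ((n : ℚ) - 1)) := by exact_mod_cast key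
  push_cast at key2 ⊢
  linarith
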